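/- Let q0, q1 : ℝ → ℂ be infinitely differentiable. Then for every infinitely differentiable ψ : ℝ → ℂ and every x ∈ ℝ, P2(L3ψ)(x) − L3(P2ψ)(x) = 2 q0′(x) ψ′(x) + ( q0″(x) − (1/6) q1‴(x) − (2/3) q1(x) q1′(x) ) ψ(x). In particular, the commutator [P2, L3] is a differential expression of order one. -/
import Mathlib


/-- The third-order Boussinesq Lax differential expression
`L₃ψ = ψ''' + q₁ ψ' + ((1/2) q₁' + q₀) ψ`. -/
noncomputable def L3 (q0 q1 ψ : ℝ → ℂ) : ℝ → ℂ :=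
  fun x => iteratedDeriv 3 ψ x + q1 x * deriv ψ x
    + ((1 / 2 : ℂ) * deriv q1 x + q0 x) * ψ x

/-- The second-order differential expression `P₂ψ = ψ'' + (2/3) q₁ ψ`. -/
noncomputable def P2 (q1 ψ : ℝ → ℂ) : ℝ → ℂ :=
  fun x => iteratedDeriv 2 ψ x + (2 / 3 : ℂ) * q1 x * ψ x

lemma contDiff_iteratedDeriv' {f : ℝ → ℂ} (hf : ContDiff ℝ (⊤ : ℕ∞) f) (n : ℕ) :
    ContDiff ℝ (⊤ : ℕ∞) (iteratedDeriv n f) := by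
  induction n with
  | zero => simpa using hf
  | succ n ih => rw [iteratedDeriv_succ]; exact (contDiff_infty_iff_deriv.mp ih).2

lemma hasDerivAt_iter {f : ℝ → ℂ} (hf : ContDiff ℝ (⊤ : ℕ∞) f) (n : ℕ) (y : ℝ) :
    HasDerivAt (iteratedDeriv n f) (iteratedDeriv (n + 1) f y) y := by
  rw [iteratedDeriv_succ]
  exact ((contDiff_iteratedDeriv' hf n).differentiable (by simp) y).hasDerivAt


/-- The commutator `[P₂, L₃]` is the first-order differential expression
`2 q₀' (d/dx) + (q₀'' - (1/6) q₁''' - (2/3) q₁ q₁')`. -/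
theorem commutator_P2_L3_order_one
    (q0 q1 : ℝ → ℂ) (hq0 : ContDiff ℝ (⊤ : ℕ∞) q0) (hq1 : ContDiff ℝ (⊤ : ℕ∞) q1) :
    ∀ ψ : ℝ → ℂ, ContDiff ℝ (⊤ : ℕ∞) ψ → ∀ x : ℝ,
      P2 q1 (L3 q0 q1 ψ) x - L3 q0 q1 (P2 q1 ψ) x
        = 2 * deriv q0 x * deriv ψ x
          + (iteratedDeriv 2 q0 x - (1 / 6) * iteratedDeriv 3 q1 x
              - (2 / 3) * q1 x * deriv q1 x) * ψ x := by
  intro ψ hψ x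
  have hψ' : ContDiff ℝ (⊤ : ℕ∞) ψ := hψ.of_le (by simp)
  have hq0' : ContDiff ℝ (⊤ : ℕ∞) q0 := hq0.of_le (by simp)
  have hq1' : ContDiff ℝ (⊤ : ℕ∞) q1 := hq1.of_le (by simp)
  have F : ∀ n y, HasDerivAt (iteratedDeriv n ψ) (iteratedDeriv (n + 1) ψ y) y :=
    fun n y => hasDerivAt_iter hψ' n y
  have A : ∀ n y, HasDerivAt (iteratedDeriv n q1) (iteratedDeriv (n + 1) q1 y) y :=
    fun n y => hasDerivAt_iter hq1' n y
  have B : ∀ n y, HasDerivAt (iteratedDeriv n q0) (iteratedDeriv (n + 1) q0 y) y :=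
    fun n y => hasDerivAt_iter hq0' n y
  -- rewrite L3 and P2 uniformly with iteratedDeriv
  have EL : L3 q0 q1 ψ = fun y => iteratedDeriv 3 ψ y
      + iteratedDeriv 0 q1 y * iteratedDeriv 1 ψ y
      + ((1 / 2 : ℂ) * iteratedDeriv 1 q1 y + iteratedDeriv 0 q0 y) * iteratedDeriv 0 ψ y := by
    funext y; simp [L3, iteratedDeriv_one, iteratedDeriv_zero]
  have EP : P2 q1 ψ = fun y => iteratedDeriv 2 ψ y
      + (2 / 3 : ℂ) * iteratedDeriv 0 q1 y * iteratedDeriv 0 ψ y := by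
    funext y; simp [P2, iteratedDeriv_zero]
  -- first derivative of L3 ψ
  have e1 : deriv (L3 q0 q1 ψ) = fun y =>
      iteratedDeriv 4 ψ y
      + (iteratedDeriv 1 q1 y * iteratedDeriv 1 ψ y + iteratedDeriv 0 q1 y * iteratedDeriv 2 ψ y)
      + (((1 / 2 : ℂ) * iteratedDeriv 2 q1 y + iteratedDeriv 1 q0 y) * iteratedDeriv 0 ψ y
          + ((1 / 2 : ℂ) * iteratedDeriv 1 q1 y + iteratedDeriv 0 q0 y) * iteratedDeriv 1 ψ y) := by
    funext y
    rw [EL]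
    exact (((F 3 y).add ((A 0 y).mul (F 1 y))).add
      ((((A 1 y).const_mul ((1 / 2 : ℂ))).add (B 0 y)).mul (F 0 y))).deriv
  -- second derivative of L3 ψ at x
  have key1 : iteratedDeriv 2 (L3 q0 q1 ψ) x =
      iteratedDeriv 5 ψ x
      + ((iteratedDeriv 2 q1 x * iteratedDeriv 1 ψ x + iteratedDeriv 1 q1 x * iteratedDeriv 2 ψ x)
        + (iteratedDeriv 1 q1 x * iteratedDeriv 2 ψ x + iteratedDeriv 0 q1 x * iteratedDeriv 3 ψ x))
      + ((((1 / 2 : ℂ) * iteratedDeriv 3 q1 x + iteratedDeriv 2 q0 x) * iteratedDeriv 0 ψ x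
            + ((1 / 2 : ℂ) * iteratedDeriv 2 q1 x + iteratedDeriv 1 q0 x) * iteratedDeriv 1 ψ x)
        + (((1 / 2 : ℂ) * iteratedDeriv 2 q1 x + iteratedDeriv 1 q0 x) * iteratedDeriv 1 ψ x
            + ((1 / 2 : ℂ) * iteratedDeriv 1 q1 x + iteratedDeriv 0 q0 x) * iteratedDeriv 2 ψ x)) := by
    rw [iteratedDeriv_succ, iteratedDeriv_one, e1]
    exact (((F 4 x).add (((A 1 x).mul (F 1 x)).add ((A 0 x).mul (F 2 x)))).add
      (((((A 2 x).const_mul ((1 / 2 : ℂ))).add (B 1 x)).mul (F 0 x)).add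
        ((((A 1 x).const_mul ((1 / 2 : ℂ))).add (B 0 x)).mul (F 1 x)))).deriv
  -- derivatives of P2 ψ
  have p1 : ∀ y, HasDerivAt (P2 q1 ψ)
      (iteratedDeriv 3 ψ y
        + ((2 / 3 : ℂ) * iteratedDeriv 1 q1 y * iteratedDeriv 0 ψ y
          + (2 / 3 : ℂ) * iteratedDeriv 0 q1 y * iteratedDeriv 1 ψ y)) y := by
    intro y
    rw [EP]
    exact (F 2 y).add (((A 0 y).const_mul ((2 / 3 : ℂ))).mul (F 0 y))
  have ep1 : deriv (P2 q1 ψ) = fun y =>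
      iteratedDeriv 3 ψ y
        + ((2 / 3 : ℂ) * iteratedDeriv 1 q1 y * iteratedDeriv 0 ψ y
          + (2 / 3 : ℂ) * iteratedDeriv 0 q1 y * iteratedDeriv 1 ψ y) :=
    funext fun y => (p1 y).deriv
  have p2 : ∀ y, HasDerivAt (deriv (P2 q1 ψ))
      (iteratedDeriv 4 ψ y
        + (((2 / 3 : ℂ) * iteratedDeriv 2 q1 y * iteratedDeriv 0 ψ y
            + (2 / 3 : ℂ) * iteratedDeriv 1 q1 y * iteratedDeriv 1 ψ y)
          + ((2 / 3 : ℂ) * iteratedDeriv 1 q1 y * iteratedDeriv 1 ψ y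
            + (2 / 3 : ℂ) * iteratedDeriv 0 q1 y * iteratedDeriv 2 ψ y))) y := by
    intro y
    rw [ep1]
    exact (F 3 y).add ((((A 1 y).const_mul ((2 / 3 : ℂ))).mul (F 0 y)).add
      (((A 0 y).const_mul ((2 / 3 : ℂ))).mul (F 1 y)))
  have ep2 : deriv (deriv (P2 q1 ψ)) = fun y =>
      iteratedDeriv 4 ψ y
        + (((2 / 3 : ℂ) * iteratedDeriv 2 q1 y * iteratedDeriv 0 ψ y
            + (2 / 3 : ℂ) * iteratedDeriv 1 q1 y * iteratedDeriv 1 ψ y)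
          + ((2 / 3 : ℂ) * iteratedDeriv 1 q1 y * iteratedDeriv 1 ψ y
            + (2 / 3 : ℂ) * iteratedDeriv 0 q1 y * iteratedDeriv 2 ψ y)) :=
    funext fun y => (p2 y).deriv
  have key2 : iteratedDeriv 3 (P2 q1 ψ) x =
      iteratedDeriv 5 ψ x
        + ((((2 / 3 : ℂ) * iteratedDeriv 3 q1 x * iteratedDeriv 0 ψ x
              + (2 / 3 : ℂ) * iteratedDeriv 2 q1 x * iteratedDeriv 1 ψ x)
            + ((2 / 3 : ℂ) * iteratedDeriv 2 q1 x * iteratedDeriv 1 ψ x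
              + (2 / 3 : ℂ) * iteratedDeriv 1 q1 x * iteratedDeriv 2 ψ x))
          + (((2 / 3 : ℂ) * iteratedDeriv 2 q1 x * iteratedDeriv 1 ψ x
              + (2 / 3 : ℂ) * iteratedDeriv 1 q1 x * iteratedDeriv 2 ψ x)
            + ((2 / 3 : ℂ) * iteratedDeriv 1 q1 x * iteratedDeriv 2 ψ x
              + (2 / 3 : ℂ) * iteratedDeriv 0 q1 x * iteratedDeriv 3 ψ x))) := by
    rw [iteratedDeriv_succ, iteratedDeriv_succ, iteratedDeriv_one, ep2]
    exact ((F 4 x).add (((((A 2 x).const_mul ((2 / 3 : ℂ))).mul (F 0 x)).add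
        (((A 1 x).const_mul ((2 / 3 : ℂ))).mul (F 1 x))).add
      ((((A 1 x).const_mul ((2 / 3 : ℂ))).mul (F 1 x)).add
        (((A 0 x).const_mul ((2 / 3 : ℂ))).mul (F 2 x))))).deriv
  have ep1x := congrFun ep1 x
  have g1 : P2 q1 (L3 q0 q1 ψ) x
      = iteratedDeriv 2 (L3 q0 q1 ψ) x + (2 / 3 : ℂ) * q1 x * L3 q0 q1 ψ x := rfl
  have g2 : L3 q0 q1 (P2 q1 ψ) x
      = iteratedDeriv 3 (P2 q1 ψ) x + q1 x * deriv (P2 q1 ψ) x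
        + ((1 / 2 : ℂ) * deriv q1 x + q0 x) * P2 q1 ψ x := rfl
  rw [g1, g2, key1, key2, ep1x, congrFun EL x, congrFun EP x]
  simp only [iteratedDeriv_zero, iteratedDeriv_one]
  ring
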